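/- Let ε > 0 and 0 < ε₁ < ε. Let ν₁ and ν₂ be f-invariant Borel probability measures with ν₁(Λ) = ν₂(Λ) = 1, each almost expansive on Λ at scale ε (i.e. ν₁(NE(ε;Λ)) = 0 and ν₂(NE(ε;Λ)) = 0), and mutually singular. Then for every β > 0 and every M > 0 there exist compact sets Q_t ⊂ Λ defined for all sufficiently large t, satisfying ν₁(Q_t) ≥ 1 − β and ν₂(Q_t) = 0, such that for all integers i, j with 0 ≤ i, j ≤ M: limsup_{t→∞} ν₂( ⋃_{y∈Q_t} f_{−i}( B_{t−(i+j)}( f_i(y), ε₁ ) ) ) ≤ β. -/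

import Mathlib

/-
Mutual singularity of the two flow-invariant measures is witnessed by a flow-invariant set `A`:
the points whose orbit spends almost all time in a set separating `ν₁` from `ν₂`. Take a compact
`K ⊆ Λ ∩ A` of `ν₁`-measure at least `1 - β` and `Q t = Λ ∩ f_{t/2}⁻¹ K`. Applying `f_{t/2}` to a
point of the union inside the limsup gives a point `ε₁`-shadowed on `[-n, n]` by a point of `K`,
once `t ≥ 2 (n + i + j)`; by invariance the union has `ν₂`-measure at most that of the compact set
`W_n` of such points. The sets `W_n` decrease to points whose `ε`-orbit-neighbourhood `Γ_ε` meets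
`K`; outside the non-expansive set such a point lies on the orbit of a point of `K`, hence in the
`ν₂`-null set `A`. So the limsup is `0`.
-/

open Set Filter MeasureTheory Topology

namespace CTFlow

variable {X : Type*}

/-- A continuous flow on `X`. -/
def IsFlow [TopologicalSpace X] (f : ℝ → X → X) : Prop :=
  Continuous (fun p : ℝ × X => f p.1 p.2) ∧ (∀ x, f 0 x = x) ∧
    ∀ s t : ℝ, ∀ x, f (s + t) x = f s (f t x)

variable [MetricSpace X]

/-- The Bowen metric `d_t(x,y) = sup_{s ∈ [0,t]} d(f_s x, f_s y)`. -/
noncomputable def bowenDist (f : ℝ → X → X) (t : ℝ) (x y : X) : ℝ :=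
  ⨆ s : Icc (0:ℝ) t, dist (f (s : ℝ) x) (f (s : ℝ) y)

/-- The Bowen ball `B_t(x,ε)`. -/
def bowenBall (f : ℝ → X → X) (t ε : ℝ) (x : X) : Set X :=
  {y | bowenDist f t x y < ε}

/-- Birkhoff integral `Φ_0(x,t) = ∫_0^t φ(f_s x) ds`. -/
noncomputable def birk (f : ℝ → X → X) (φ : X → ℝ) (x : X) (t : ℝ) : ℝ :=
  ∫ s in (0:ℝ)..t, φ (f s x)

/-- `Φ_ε(x,t) = sup_{y ∈ B_t(x,ε)} ∫_0^t φ(f_s y) ds`, with `Φ_0` the Birkhoff integral. -/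
noncomputable def PhiSup (f : ℝ → X → X) (φ : X → ℝ) (ε : ℝ) (x : X) (t : ℝ) : ℝ :=
  if ε = 0 then birk f φ x t
  else sSup ((fun y => birk f φ y t) '' bowenBall f t ε x)

/-- `(C)_t = {x : (x,t) ∈ C}`. -/
def segsAt (C : Set (X × ℝ)) (t : ℝ) : Set X := {x | (x, t) ∈ C}

/-- `E` is a `(t,δ)`-separated subset of `(C)_t`. -/
def IsSepSet (f : ℝ → X → X) (C : Set (X × ℝ)) (t δ : ℝ) (E : Finset X) : Prop :=
  (E : Set X) ⊆ segsAt C t ∧ ∀ x ∈ E, ∀ y ∈ E, x ≠ y → δ < bowenDist f t x y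

/-- The two-scale partition function `λ(C,φ,δ,ε,t)`. -/
noncomputable def partFn (f : ℝ → X → X) (φ : X → ℝ) (C : Set (X × ℝ)) (δ ε t : ℝ) : ℝ :=
  sSup {r : ℝ | ∃ E : Finset X, IsSepSet f C t δ E ∧
    r = ∑ x ∈ E, Real.exp (PhiSup f φ ε x t)}

/-- Pressure at scales `δ, ε`:  `P(C,φ,δ,ε) = limsup_{t→∞} (1/t) log λ(C,φ,δ,ε,t)`. -/
noncomputable def pres (f : ℝ → X → X) (φ : X → ℝ) (C : Set (X × ℝ)) (δ ε : ℝ) : ℝ :=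
  Filter.limsup (fun t : ℝ => Real.log (partFn f φ C δ ε t) / t) Filter.atTop

/-- `P(C,φ) = lim_{δ→0} P(C,φ,δ)` (rendered as a limsup as `δ → 0⁺`). -/
noncomputable def presFull (f : ℝ → X → X) (φ : X → ℝ) (C : Set (X × ℝ)) : ℝ :=
  Filter.limsup (fun δ : ℝ => pres f φ C δ 0) (nhdsWithin (0:ℝ) (Ioi 0))

/-- The collection `Λ × ℝ⁺` of orbit segments starting in `Λ`. -/
def lamSegs (Λ : Set X) : Set (X × ℝ) := Λ ×ˢ Ici (0:ℝ)

/-- Topological pressure `P(φ;Λ) = P(Λ×ℝ⁺, φ)`. -/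
noncomputable def topPres (f : ℝ → X → X) (φ : X → ℝ) (Λ : Set X) : ℝ :=
  presFull f φ (lamSegs Λ)

/-- `O(V)`: finite orbit segments entirely contained in `V`. -/
def orbSegs (f : ℝ → X → X) (V : Set X) : Set (X × ℝ) :=
  {q | 0 ≤ q.2 ∧ ∀ s ∈ Ico (0:ℝ) q.2, f s q.1 ∈ V}

/-- `[C] = {(x,n) ∈ M×ℕ : (f_{−s} x, n+s+t) ∈ C for some s,t ∈ [0,1)}`. -/
def bracket (f : ℝ → X → X) (C : Set (X × ℝ)) : Set (X × ℝ) :=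
  {q | ∃ n : ℕ, q.2 = (n : ℝ) ∧
    ∃ s ∈ Ico (0:ℝ) 1, ∃ t ∈ Ico (0:ℝ) 1, (f (-s) q.1, (n : ℝ) + s + t) ∈ C}

/-- `f_{i,j}(C) = {(f_i x, t−(i+j)) : (x,t) ∈ C, t ≥ i+j}`. -/
def fShift (f : ℝ → X → X) (i j : ℝ) (C : Set (X × ℝ)) : Set (X × ℝ) :=
  {q | ∃ x t, (x, t) ∈ C ∧ i + j ≤ t ∧ q = (f i x, t - (i + j))}

/-- Tail (W)-specification at scale `δ` with gluing-time bound `τ` and minimal length `T₀`,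
with shadowing orbits contained in the collection `OV`. -/
def HasSpecAt (f : ℝ → X → X) (C OV : Set (X × ℝ)) (δ τ T₀ : ℝ) : Prop :=
  ∀ (k : ℕ) (x : ℕ → X) (t : ℕ → ℝ), 0 < k →
    (∀ i < k, (x i, t i) ∈ C) → (∀ i < k, T₀ ≤ t i) →
    ∃ (y : X) (g : ℕ → ℝ), (∀ i, g i ∈ Icc (0:ℝ) τ) ∧
      (∀ j < k, bowenDist f (t j)
        (f ((∑ i ∈ Finset.range j, t i) + ∑ i ∈ Finset.range j, g i) y) (x j) < δ) ∧
      (y, (∑ i ∈ Finset.range k, t i) + ∑ i ∈ Finset.range (k - 1), g i) ∈ OV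

/-- Tail (W)-specification at scale `δ` (for some `τ > 0`, `T₀ > 0`). -/
def HasTailSpec (f : ℝ → X → X) (C OV : Set (X × ℝ)) (δ : ℝ) : Prop :=
  ∃ τ > 0, ∃ T₀ > 0, HasSpecAt f C OV δ τ T₀

/-- The Bowen property of `φ` on a collection `C` at scale `ε`. -/
def HasBowen (f : ℝ → X → X) (φ : X → ℝ) (C : Set (X × ℝ)) (ε : ℝ) : Prop :=
  ∃ K > 0, ∀ q ∈ C, ∀ y ∈ bowenBall f q.2 ε q.1,
    |birk f φ q.1 q.2 - birk f φ y q.2| ≤ K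

/-- A decomposition `(P,G,S)` of a collection `D` of orbit segments. -/
structure Decomp (f : ℝ → X → X) (D P G S : Set (X × ℝ)) where
  p : X × ℝ → ℝ
  g : X × ℝ → ℝ
  s : X × ℝ → ℝ
  p_nonneg : ∀ q ∈ D, 0 ≤ p q
  g_nonneg : ∀ q ∈ D, 0 ≤ g q
  s_nonneg : ∀ q ∈ D, 0 ≤ s q
  sum_eq : ∀ q ∈ D, p q + g q + s q = q.2
  mem_P : ∀ q ∈ D, (q.1, p q) ∈ P
  mem_G : ∀ q ∈ D, (f (p q) q.1, g q) ∈ G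
  mem_S : ∀ q ∈ D, (f (p q + g q) q.1, s q) ∈ S

/-- `G^M = {(x,t) ∈ D : p(x,t) ≤ M and s(x,t) ≤ M}`. -/
def Decomp.GM {f : ℝ → X → X} {D P G S : Set (X × ℝ)} (dec : Decomp f D P G S)
    (M : ℝ) : Set (X × ℝ) :=
  {q ∈ D | dec.p q ≤ M ∧ dec.s q ≤ M}

/-- The two-sided infinite Bowen ball `Γ_ε(x)`. -/
def GammaSet (f : ℝ → X → X) (ε : ℝ) (x : X) : Set X :=
  {y | ∀ t : ℝ, dist (f t x) (f t y) ≤ ε}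

/-- The set of non-expansive points at scale `ε` in `Λ`. -/
def NE (f : ℝ → X → X) (ε : ℝ) (Λ : Set X) : Set X :=
  {x ∈ Λ | ∀ s > 0, ¬ GammaSet f ε x ⊆ (fun r : ℝ => f r x) '' Icc (-s) s}

/-- The flow is almost expansive on `Λ` at scale `ε`. -/
def AlmostExpansive [MeasurableSpace X] (f : ℝ → X → X) (Λ : Set X) (ε : ℝ) : Prop :=
  ∀ μ : Measure X, IsProbabilityMeasure μ → (∀ t : ℝ, Measure.map (f t) μ = μ) →
    μ Λ = 1 → μ (NE f ε Λ) = 0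

/-- `ν_t`: normalized weighted sum of Dirac measures on a separated set. -/
noncomputable def nuT [MeasurableSpace X] (f : ℝ → X → X) (φ : X → ℝ) (E : Finset X)
    (t : ℝ) : Measure X :=
  (ENNReal.ofReal (∑ x ∈ E, Real.exp (birk f φ x t)))⁻¹ •
    ∑ x ∈ E, ENNReal.ofReal (Real.exp (birk f φ x t)) • Measure.dirac x

/-- `μ_t = (1/t) ∫_0^t (f_s)_* ν_t ds`. -/
noncomputable def muT [MeasurableSpace X] (f : ℝ → X → X) (φ : X → ℝ) (E : Finset X)
    (t : ℝ) : Measure X :=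
  Measure.bind ((ENNReal.ofReal t)⁻¹ • volume.restrict (Ioc (0:ℝ) t))
    (fun s => Measure.map (f s) (nuT f φ E t))

/-- `μ` is obtained from the standard construction at scale `ρ₁` over the collection `C`:
it is a weak* limit of the measures `μ_{t_k}` built from near-maximizing
`(t,ρ₁)`-separated sets. -/
def IsStdMeasure [MeasurableSpace X] (f : ℝ → X → X) (φ : X → ℝ) (C : Set (X × ℝ))
    (ρ₁ : ℝ) (μ : Measure X) : Prop :=
  ∃ E : ℝ → Finset X,
    (∀ t > 0, IsSepSet f C t ρ₁ (E t) ∧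
      partFn f φ C ρ₁ 0 t - 1 ≤ ∑ x ∈ E t, Real.exp (birk f φ x t)) ∧
    ∃ tk : ℕ → ℝ, (∀ n, 0 < tk n) ∧ Filter.Tendsto tk Filter.atTop Filter.atTop ∧
      ∀ gc : C(X, ℝ), Filter.Tendsto
        (fun n => ∫ x, gc x ∂(muT f φ (E (tk n)) (tk n))) Filter.atTop
        (𝓝 (∫ x, gc x ∂μ))

section FlowInvariantSets

variable {α : Type*} {f : ℝ → α → α}

theorem IsFlow.continuous_apply [TopologicalSpace α] (hf : IsFlow f) (t : ℝ) :
    Continuous (f t) :=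
  hf.1.uncurry_left t

theorem IsFlow.apply_neg_apply [TopologicalSpace α] (hf : IsFlow f) (t : ℝ) (x : α) :
    f (-t) (f t x) = x := by
  rw [← hf.2.2, neg_add_cancel, hf.2.1]

theorem IsFlow.measurePreserving [TopologicalSpace α] [MeasurableSpace α] [BorelSpace α]
    (hf : IsFlow f) {ν : Measure α} (hinv : ∀ t, Measure.map (f t) ν = ν) (t : ℝ) :
    MeasurePreserving (f t) ν ν :=
  ⟨(hf.continuous_apply t).measurable, hinv t⟩

def aeOrbitSet (f : ℝ → α → α) (S : Set α) : Set α :=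
  {x | ∀ᵐ r : ℝ, f r x ∈ S}

theorem measurableSet_aeOrbitSet [MeasurableSpace α] (hmeas : Measurable fun p : ℝ × α => f p.1 p.2)
    {S : Set α} (hS : MeasurableSet S) : MeasurableSet (aeOrbitSet f S) := by
  have hbad : MeasurableSet {p : α × ℝ | f p.2 p.1 ∉ S} := (hmeas.comp measurable_swap) hS.compl
  exact measurable_measure_prodMk_left (ν := (volume : Measure ℝ)) hbad
    (measurableSet_singleton 0)

theorem isInvariant_aeOrbitSet (hadd : ∀ s t x, f (s + t) x = f s (f t x)) (S : Set α) :
    IsInvariant f (aeOrbitSet f S) := by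
  intro t x hx
  have := (measurePreserving_add_right volume t).quasiMeasurePreserving.ae hx
  simpa only [aeOrbitSet, mem_ofPred_eq, hadd] using this

theorem ae_mem_aeOrbitSet [MeasurableSpace α] (hmeas : Measurable fun p : ℝ × α => f p.1 p.2)
    {ν : Measure α} [SFinite ν] (hinv : ∀ t, Measure.map (f t) ν = ν) {S : Set α}
    (hS : MeasurableSet S) (hν : ∀ᵐ x ∂ν, x ∈ S) : ∀ᵐ x ∂ν, x ∈ aeOrbitSet f S := by
  refine (Measure.ae_ae_comm (p := fun x r => f r x ∈ S) ((hmeas.comp measurable_swap) hS)).2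
    (ae_of_all _ fun t => ?_)
  exact (MeasurePreserving.quasiMeasurePreserving
    ⟨hmeas.comp measurable_prodMk_left, hinv t⟩).ae hν

theorem disjoint_aeOrbitSet_compl (S : Set α) : Disjoint (aeOrbitSet f S) (aeOrbitSet f Sᶜ) := by
  refine Set.disjoint_left.2 fun x h₁ h₂ => ?_
  have h : ∀ᵐ r : ℝ, f r x ∈ S ∧ f r x ∈ Sᶜ := Filter.Eventually.and h₁ h₂
  obtain ⟨r, hr, hr'⟩ := h.exists
  exact hr' hr

theorem exists_isInvariant_of_mutuallySingular [MeasurableSpace α]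
    (hmeas : Measurable fun p : ℝ × α => f p.1 p.2) (hadd : ∀ s t x, f (s + t) x = f s (f t x))
    {ν₁ ν₂ : Measure α} [SFinite ν₁] [SFinite ν₂]
    (hinv₁ : ∀ t, Measure.map (f t) ν₁ = ν₁) (hinv₂ : ∀ t, Measure.map (f t) ν₂ = ν₂)
    (hsing : ν₁ ⟂ₘ ν₂) :
    ∃ A, MeasurableSet A ∧ IsInvariant f A ∧ ν₁ Aᶜ = 0 ∧ ν₂ A = 0 := by
  obtain ⟨s, hs, hs₁, hs₂⟩ := hsing
  have h₂ : ν₂ (aeOrbitSet f s)ᶜ = 0 := ae_mem_aeOrbitSet hmeas hinv₂ hs (mem_ae_iff.2 hs₂)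
  refine ⟨aeOrbitSet f sᶜ, measurableSet_aeOrbitSet hmeas hs.compl, isInvariant_aeOrbitSet hadd _,
    ae_mem_aeOrbitSet hmeas hinv₁ hs.compl (compl_mem_ae_iff.2 hs₁), measure_mono_null ?_ h₂⟩
  simpa using (disjoint_aeOrbitSet_compl (f := f) sᶜ).subset_compl_right

theorem exists_isClosed_subset_ofReal_one_sub_le [TopologicalSpace α] [MeasurableSpace α]
    {μ : Measure α} [IsProbabilityMeasure μ] [μ.WeaklyRegular] {s : Set α} (hs : MeasurableSet s)
    (hμs : μ s = 1) {β : ℝ} (hβ : 0 < β) : ∃ K ⊆ s, IsClosed K ∧ ENNReal.ofReal (1 - β) ≤ μ K := by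
  obtain ⟨K, hKs, hK, hlt⟩ := hs.exists_isClosed_lt_add (measure_ne_top μ s)
    (ENNReal.ofReal_pos.2 hβ).ne'
  refine ⟨K, hKs, hK, ?_⟩
  rw [ENNReal.ofReal_sub _ hβ.le, ENNReal.ofReal_one, tsub_le_iff_right, ← hμs]
  exact hlt.le

end FlowInvariantSets

section Shadowing

variable {f : ℝ → X → X}

def shadowSet (f : ℝ → X → X) (K : Set X) (δ T : ℝ) : Set X :=
  {w | ∃ v ∈ K, ∀ r ∈ Icc (-T) T, dist (f r v) (f r w) ≤ δ}

theorem shadowSet_anti {K : Set X} {δ T T' : ℝ} (h : T ≤ T') :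
    shadowSet f K δ T' ⊆ shadowSet f K δ T :=
  fun _ ⟨v, hv, hd⟩ => ⟨v, hv, fun r hr => hd r ⟨by linarith [hr.1], by linarith [hr.2]⟩⟩

theorem isClosed_shadowSet [CompactSpace X] (hf : IsFlow f) {K : Set X} (hK : IsClosed K)
    (δ T : ℝ) : IsClosed (shadowSet f K δ T) := by
  have hpairs : IsClosed (Prod.fst ⁻¹' K ∩
      ⋂ r ∈ Icc (-T) T, {p : X × X | dist (f r p.1) (f r p.2) ≤ δ}) :=
    (hK.preimage continuous_fst).inter <| isClosed_biInter fun r _ => isClosed_le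
      (((hf.continuous_apply r).comp continuous_fst).dist
        ((hf.continuous_apply r).comp continuous_snd)) continuous_const
  convert isClosedMap_snd_of_compactSpace _ hpairs using 1
  ext w
  simp [shadowSet]

theorem gammaSet_mono {δ ε : ℝ} (h : δ ≤ ε) (x : X) : GammaSet f δ x ⊆ GammaSet f ε x :=
  fun _ hy t => (hy t).trans h

theorem iInter_shadowSet_subset (hf : IsFlow f) {K : Set X} (hK : IsCompact K) (δ : ℝ) :
    ⋂ n : ℕ, shadowSet f K δ n ⊆ {w | ∃ v ∈ K, v ∈ GammaSet f δ w} := by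
  intro w hw
  choose v hvK hvd using mem_iInter.1 hw
  obtain ⟨u, huK, φ, hφ, hlim⟩ := hK.tendsto_subseq hvK
  refine ⟨u, huK, fun r => ?_⟩
  rw [dist_comm]
  refine le_of_tendsto
    ((((hf.continuous_apply r).tendsto u).comp hlim).dist tendsto_const_nhds) ?_
  filter_upwards [eventually_ge_atTop ⌈|r|⌉₊] with m hm
  have hr : |r| ≤ φ m := (Nat.le_ceil _).trans (by exact_mod_cast hm.trans hφ.le_apply)
  exact hvd (φ m) r (abs_le.1 hr)

theorem exists_apply_eq_of_mem_gammaSet {Λ : Set X} {ε : ℝ} {w v : X} (hw : w ∈ Λ \ NE f ε Λ)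
    (hv : v ∈ GammaSet f ε w) : ∃ r, f r w = v := by
  obtain ⟨hwΛ, hwNE⟩ := hw
  simp only [NE, mem_ofPred_eq, not_and, not_forall, not_not] at hwNE
  obtain ⟨s, -, hsub⟩ := hwNE hwΛ
  obtain ⟨r, -, hr⟩ := hsub hv
  exact ⟨r, hr⟩

theorem measure_iInter_shadowSet_eq_zero [MeasurableSpace X] (hf : IsFlow f) {ν : Measure X}
    {Λ A K : Set X} {δ ε : ℝ} (hK : IsCompact K) (hKA : K ⊆ A) (hA : IsInvariant f A)
    (hδε : δ ≤ ε) (hΛ : ν Λᶜ = 0) (hNE : ν (NE f ε Λ) = 0) (hA₀ : ν A = 0) :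
    ν (⋂ n : ℕ, shadowSet f K δ n) = 0 := by
  refine measure_mono_null (fun w hw => ?_)
    (measure_union_null (measure_union_null hΛ hNE) hA₀)
  by_cases hwΛ : w ∈ Λᶜ ∪ NE f ε Λ
  · exact Or.inl hwΛ
  obtain ⟨v, hvK, hv⟩ := iInter_shadowSet_subset hf hK δ hw
  have hw' : w ∈ Λ \ NE f ε Λ := by simpa using hwΛ
  obtain ⟨r, rfl⟩ := exists_apply_eq_of_mem_gammaSet hw' (gammaSet_mono hδε w hv)
  exact Or.inr (hf.apply_neg_apply r w ▸ hA (-r) (hKA hvK))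

theorem dist_lt_of_mem_bowenBall [BoundedSpace X] {t δ s : ℝ} {x y : X}
    (hy : y ∈ bowenBall f t δ x) (hs : s ∈ Icc 0 t) : dist (f s x) (f s y) < δ := by
  refine lt_of_le_of_lt (le_ciSup (f := fun s : Icc (0:ℝ) t => dist (f s x) (f s y))
    ⟨Metric.diam (univ : Set X), ?_⟩ ⟨s, hs⟩) hy
  rintro _ ⟨_, rfl⟩
  exact Metric.dist_le_diam_of_mem (Bornology.IsBounded.all _) trivial trivial

theorem image_bowenBall_subset_preimage_shadowSet [BoundedSpace X] (hf : IsFlow f) {K : Set X}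
    {δ T τ t i j : ℝ} {y : X} (hy : f τ y ∈ K) (hi : T + i ≤ τ) (hj : τ + T + j ≤ t) :
    f (-i) '' bowenBall f (t - (i + j)) δ (f i y) ⊆ f τ ⁻¹' shadowSet f K δ T := by
  rintro _ ⟨z, hz, rfl⟩
  refine ⟨f τ y, hy, fun r hr => ?_⟩
  have hs : r + τ - i ∈ Icc 0 (t - (i + j)) := ⟨by linarith [hr.1], by linarith [hr.2]⟩
  calc dist (f r (f τ y)) (f r (f τ (f (-i) z)))
      = dist (f (r + τ - i) (f i y)) (f (r + τ - i) z) := by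
        simp only [← hf.2.2]
        ring_nf
    _ ≤ δ := (dist_lt_of_mem_bowenBall hz hs).le

theorem limsup_measure_iUnion_image_bowenBall_le [CompactSpace X] [MeasurableSpace X]
    [OpensMeasurableSpace X] (hf : IsFlow f) {ν : Measure X} [IsFiniteMeasure ν]
    (hν : ∀ t, MeasurePreserving (f t) ν ν) {K : Set X} (hK : IsClosed K) {Q : ℝ → Set X}
    (hQ : ∀ t, Q t ⊆ f (t / 2) ⁻¹' K) {δ i j : ℝ} (hi : 0 ≤ i) (hj : 0 ≤ j) :
    limsup (fun t => ν (⋃ y ∈ Q t, f (-i) '' bowenBall f (t - (i + j)) δ (f i y))) atTop ≤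
      ν (⋂ n : ℕ, shadowSet f K δ n) := by
  rw [Antitone.measure_iInter (fun m n h => shadowSet_anti (by exact_mod_cast h))
    (fun n => (isClosed_shadowSet hf hK _ _).nullMeasurableSet) ⟨0, measure_ne_top _ _⟩]
  refine le_iInf fun n => limsup_le_of_le (by isBoundedDefault) ?_
  have hn : (0 : ℝ) ≤ n := n.cast_nonneg
  filter_upwards [eventually_ge_atTop (2 * (n + i + j))] with t ht
  calc ν (⋃ y ∈ Q t, f (-i) '' bowenBall f (t - (i + j)) δ (f i y))
      ≤ ν (f (t / 2) ⁻¹' shadowSet f K δ n) := measure_mono <| iUnion₂_subset fun y hy =>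
        image_bowenBall_subset_preimage_shadowSet hf (hQ t hy) (by linarith) (by linarith)
    _ = ν (shadowSet f K δ n) :=
        (hν _).measure_preimage (isClosed_shadowSet hf hK _ _).nullMeasurableSet

end Shadowing

theorem stmt17_general [CompactSpace X] [MeasurableSpace X] [BorelSpace X]
    (f : ℝ → X → X) (hf : IsFlow f)
    (Λ : Set X) (hΛcomp : IsCompact Λ)
    (ε ε₁ : ℝ) (hε₁ε : ε₁ < ε)
    (ν₁ ν₂ : Measure X) (hp₁ : IsProbabilityMeasure ν₁) (hp₂ : IsProbabilityMeasure ν₂)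
    (hinv₁ : ∀ t : ℝ, Measure.map (f t) ν₁ = ν₁)
    (hinv₂ : ∀ t : ℝ, Measure.map (f t) ν₂ = ν₂)
    (hν₁Λ : ν₁ Λ = 1) (hν₂Λ : ν₂ Λ = 1)
    (hexp₂ : ν₂ (NE f ε Λ) = 0)
    (hsing : ν₁ ⟂ₘ ν₂)
    (β : ℝ) (hβ : 0 < β) (M : ℝ) :
    ∃ T₃ : ℝ, ∃ Q : ℝ → Set X,
      (∀ t : ℝ, T₃ ≤ t → IsCompact (Q t) ∧ Q t ⊆ Λ ∧
        ENNReal.ofReal (1 - β) ≤ ν₁ (Q t) ∧ ν₂ (Q t) = 0) ∧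
      ∀ i j : ℕ, (i : ℝ) ≤ M → (j : ℝ) ≤ M →
        Filter.limsup (fun t : ℝ =>
            ν₂ (⋃ y ∈ Q t, f (-(i : ℝ)) ''
              bowenBall f (t - ((i : ℝ) + (j : ℝ))) ε₁ (f (i : ℝ) y)))
          Filter.atTop ≤ ENNReal.ofReal β := by
  have hΛ : MeasurableSet Λ := hΛcomp.isClosed.measurableSet
  obtain ⟨A, hA, hAinv, hA₁, hA₂⟩ :=
    exists_isInvariant_of_mutuallySingular hf.1.measurable hf.2.2 hinv₁ hinv₂ hsing
  obtain ⟨K, hKΛA, hK, hK₁⟩ := exists_isClosed_subset_ofReal_one_sub_le (hΛ.inter hA)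
    (by rwa [measure_inter_conull hA₁]) hβ
  refine ⟨0, fun t => Λ ∩ f (t / 2) ⁻¹' K, fun t _ => ⟨?_, inter_subset_left, ?_, ?_⟩,
    fun i j _ _ => ?_⟩
  · exact (hΛcomp.isClosed.inter (hK.preimage (hf.continuous_apply _))).isCompact
  · dsimp only
    rwa [inter_comm, measure_inter_conull ((prob_compl_eq_zero_iff hΛ).2 hν₁Λ),
      (hf.measurePreserving hinv₁ _).measure_preimage hK.nullMeasurableSet]
  · refine measure_mono_null
      (inter_subset_right.trans (preimage_mono (hKΛA.trans inter_subset_right))) ?_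
    rwa [(hf.measurePreserving hinv₂ _).measure_preimage hA.nullMeasurableSet]
  · refine (limsup_measure_iUnion_image_bowenBall_le hf (hf.measurePreserving hinv₂) hK
      (fun t => inter_subset_right) i.cast_nonneg j.cast_nonneg).trans ?_
    rw [measure_iInter_shadowSet_eq_zero hf hK.isCompact (hKΛA.trans inter_subset_right) hAinv
      hε₁ε.le ((prob_compl_eq_zero_iff hΛ).2 hν₂Λ) hexp₂ hA₂]
    exact zero_le

/-- Lemma 5.2: separating compact sets for two mutually singular almost expansive
measures. -/
theorem stmt17 [CompactSpace X] [MeasurableSpace X] [BorelSpace X]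
    (f : ℝ → X → X) (hf : IsFlow f)
    (Λ : Set X) (hΛcomp : IsCompact Λ) (hΛinv : ∀ t : ℝ, f t '' Λ = Λ)
    (ε ε₁ : ℝ) (hε : 0 < ε) (hε₁ : 0 < ε₁) (hε₁ε : ε₁ < ε)
    (ν₁ ν₂ : Measure X) (hp₁ : IsProbabilityMeasure ν₁) (hp₂ : IsProbabilityMeasure ν₂)
    (hinv₁ : ∀ t : ℝ, Measure.map (f t) ν₁ = ν₁)
    (hinv₂ : ∀ t : ℝ, Measure.map (f t) ν₂ = ν₂)
    (hν₁Λ : ν₁ Λ = 1) (hν₂Λ : ν₂ Λ = 1)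
    (hexp₁ : ν₁ (NE f ε Λ) = 0) (hexp₂ : ν₂ (NE f ε Λ) = 0)
    (hsing : ν₁ ⟂ₘ ν₂)
    (β : ℝ) (hβ : 0 < β) (M : ℝ) (hM : 0 < M) :
    ∃ T₃ : ℝ, ∃ Q : ℝ → Set X,
      (∀ t : ℝ, T₃ ≤ t → IsCompact (Q t) ∧ Q t ⊆ Λ ∧
        ENNReal.ofReal (1 - β) ≤ ν₁ (Q t) ∧ ν₂ (Q t) = 0) ∧
      ∀ i j : ℕ, (i : ℝ) ≤ M → (j : ℝ) ≤ M →
        Filter.limsup (fun t : ℝ =>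
            ν₂ (⋃ y ∈ Q t, f (-(i : ℝ)) ''
              bowenBall f (t - ((i : ℝ) + (j : ℝ))) ε₁ (f (i : ℝ) y)))
          Filter.atTop ≤ ENNReal.ofReal β :=
  stmt17_general f hf Λ hΛcomp ε ε₁ hε₁ε ν₁ ν₂ hp₁ hp₂ hinv₁ hinv₂ hν₁Λ hν₂Λ hexp₂ hsing β hβ M

end CTFlow
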